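/- arXiv:2208.05239 — 5 statements merged into one kernel-verified Lean document; each statement's English description precedes it below -/
import Mathlib

section
/- If a (Φ,α)-weak Poincaré inequality holds for T, i.e. ‖f‖² ≤ α(r)𝓔(T,f) + rΦ(f) for all r>0 and all f in L²₀(μ), where α : (0,∞) → [0,∞) is decreasing with α(r)=0 for r ≥ 𝔞, then a (Φ,β)-WPI holds with β = α⁻ the generalized inverse, i.e. ‖f‖² ≤ s𝓔(T,f) + α⁻(s)Φ(f) for all s>0, and α⁻(s) ≤ 𝔞 for all s>0 and α⁻(s) → 0 as s → ∞. -/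
/-!
For `r > 0` with `α r ≤ s`, the `(Φ,α)`-WPI at level `r` and `E f ≥ 0` give
`‖f‖² - s E(f) ≤ r Φ(f)`; taking the infimum over such `r` yields the `(Φ,α⁻)`-WPI at `s`.
The vanishing of `α` on `[𝔞,∞)` puts `𝔞` in every such set of levels (so `α⁻ ≤ 𝔞`), and
`α r ≤ s` for any fixed `r > 0` once `s` is large, which forces `α⁻(s) → 0`.
-/

open Filter Topology Pointwise

noncomputable def genInv (α : ℝ → ℝ) (s : ℝ) : ℝ :=
  sInf {r : ℝ | 0 < r ∧ α r ≤ s}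

theorem Real.le_sInf_mul {S : Set ℝ} (hS : S.Nonempty) {a c : ℝ} (ha : 0 ≤ a)
    (h : ∀ r ∈ S, c ≤ r * a) : c ≤ sInf S * a := by
  rw [mul_comm, ← smul_eq_mul, ← Real.sInf_smul_of_nonneg ha]
  refine le_csInf (hS.smul_set) ?_
  rintro _ ⟨r, hr, rfl⟩
  exact (h r hr).trans_eq (mul_comm r a)

namespace genInv

variable {α : ℝ → ℝ} {s : ℝ}

theorem nonneg (α : ℝ → ℝ) (s : ℝ) : 0 ≤ genInv α s :=
  Real.sInf_nonneg fun _ hr => hr.1.le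

theorem le_of_apply_le {r : ℝ} (hr : 0 < r) (hαr : α r ≤ s) : genInv α s ≤ r :=
  csInf_le ⟨0, fun _ hr' => hr'.1.le⟩ ⟨hr, hαr⟩

theorem tendsto_atTop_zero (α : ℝ → ℝ) : Tendsto (genInv α) atTop (𝓝 0) := by
  refine tendsto_order.2 ⟨fun a ha => .of_forall fun s => ha.trans_le (nonneg α s), ?_⟩
  intro ε hε
  filter_upwards [eventually_ge_atTop (α (ε / 2))] with s hs
  exact (le_of_apply_le (half_pos hε) hs).trans_lt (half_lt_self hε)

theorem le_mul_add_genInv_mul {N e φ : ℝ} (he : 0 ≤ e) (hφ : 0 ≤ φ)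
    (hlevel : ∃ r > 0, α r ≤ s) (hWPI : ∀ r > 0, N ≤ α r * e + r * φ) :
    N ≤ s * e + genInv α s * φ := by
  obtain ⟨r₀, hr₀, hαr₀⟩ := hlevel
  have hinf : N - s * e ≤ genInv α s * φ := by
    refine Real.le_sInf_mul (S := {r | 0 < r ∧ α r ≤ s}) ⟨r₀, hr₀, hαr₀⟩ hφ ?_
    rintro r ⟨hr, hαr⟩
    have := hWPI r hr
    linarith [mul_le_mul_of_nonneg_right hαr he]
  linarith

end genInv

theorem wpi_alpha_to_beta_general
    {H : Type*} [NormedAddCommGroup H]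
    (L0 : Set H) (E Φ : H → ℝ) (𝔞 : ℝ) (h𝔞pos : 0 < 𝔞)
    (hE : ∀ f ∈ L0, 0 ≤ E f) (hΦ : ∀ f ∈ L0, 0 ≤ Φ f)
    (α : ℝ → ℝ)
    (hα0 : ∀ r, 𝔞 ≤ r → α r = 0)
    (hWPI : ∀ r > 0, ∀ f ∈ L0, ‖f‖ ^ 2 ≤ α r * E f + r * Φ f) :
    (∀ s > 0, ∀ f ∈ L0,
        ‖f‖ ^ 2 ≤ s * E f + sInf {r : ℝ | 0 < r ∧ α r ≤ s} * Φ f) ∧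
    (∀ s > 0, sInf {r : ℝ | 0 < r ∧ α r ≤ s} ≤ 𝔞) ∧
    Filter.Tendsto (fun s => sInf {r : ℝ | 0 < r ∧ α r ≤ s})
      Filter.atTop (nhds 0) := by
  have hα𝔞 : ∀ s > 0, α 𝔞 ≤ s := fun s hs => (hα0 𝔞 le_rfl).trans_le hs.le
  refine ⟨fun s hs f hf => ?_, fun s hs => genInv.le_of_apply_le h𝔞pos (hα𝔞 s hs),
    genInv.tendsto_atTop_zero α⟩
  exact genInv.le_mul_add_genInv_mul (hE f hf) (hΦ f hf) ⟨𝔞, h𝔞pos, hα𝔞 s hs⟩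
    fun r hr => hWPI r hr f hf

/-- If a `(Φ,α)`-weak Poincaré inequality holds for `T` (with Dirichlet form `E`),
i.e. `‖f‖² ≤ α(r)·E(f) + r·Φ(f)` for all `r > 0` and `f ∈ L²₀(μ)`, where `α` is
decreasing on `(0,∞)` and vanishes on `[𝔞,∞)`, then a `(Φ,β)`-WPI holds with
`β = α⁻` the generalized inverse `α⁻(s) = inf {r > 0 : α(r) ≤ s}`; moreover
`α⁻(s) ≤ 𝔞` for all `s > 0` and `α⁻(s) → 0` as `s → ∞`. -/
theorem wpi_alpha_to_beta
    {H : Type*} [NormedAddCommGroup H] [InnerProductSpace ℝ H]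
    (L0 : Set H) (E Φ : H → ℝ) (𝔞 : ℝ) (h𝔞pos : 0 < 𝔞)
    (hE : ∀ f ∈ L0, 0 ≤ E f) (hΦ : ∀ f ∈ L0, 0 ≤ Φ f)
    (hsieve : ∀ f ∈ L0, ‖f‖ ^ 2 ≤ 𝔞 * Φ f)
    (α : ℝ → ℝ) (hαnonneg : ∀ r > 0, 0 ≤ α r)
    (hαanti : AntitoneOn α (Set.Ioi 0))
    (hα0 : ∀ r, 𝔞 ≤ r → α r = 0)
    (hWPI : ∀ r > 0, ∀ f ∈ L0, ‖f‖ ^ 2 ≤ α r * E f + r * Φ f) :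
    (∀ s > 0, ∀ f ∈ L0,
        ‖f‖ ^ 2 ≤ s * E f + sInf {r : ℝ | 0 < r ∧ α r ≤ s} * Φ f) ∧
    (∀ s > 0, sInf {r : ℝ | 0 < r ∧ α r ≤ s} ≤ 𝔞) ∧
    Filter.Tendsto (fun s => sInf {r : ℝ | 0 < r ∧ α r ≤ s})
      Filter.atTop (nhds 0) :=
  wpi_alpha_to_beta_general L0 E Φ 𝔞 h𝔞pos hE hΦ α hα0 hWPI
end

section
/- Suppose P(x,{x}) ≥ ε for μ-almost all x. Then 𝓔(P*P, f) ≥ 2ε 𝓔(P, f) for all f ∈ L²(μ). -/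
/-!
By adjointness, `𝓔(P*P, f)` equals `½ ∫ μ(dy) ∫∫ (f x - f z)² P(y,dx) P(y,dz)`: a step of `P*P`
is a step back to `y` followed by an independent step forward. For fixed `y`, the parts of this
double integral with `x = y` and with `z = y` each contribute `P(y,{y}) ∫ (f y - f z)² P(y,dz)`,
and they overlap only where the integrand vanishes. Finiteness of both forms, needed to pass from
Lebesgue to Bochner integrals, follows from `(a - b)² ≤ 2a² + 2b²` and the `μ`-invariance of `P`
and of `P*P`.
-/

open MeasureTheory ProbabilityTheory

/-- The Dirichlet form `𝓔(T,f) = (1/2)∫∫ (f(x)−f(y))² T(x,dy) μ(dx)`. -/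
noncomputable def dirichletForm {E : Type*} [MeasurableSpace E] (μ : Measure E)
    (P : Kernel E E) (f : E → ℝ) : ℝ :=
  (1 / 2) * ∫ x, ∫ y, (f x - f y) ^ 2 ∂(P x) ∂μ

open scoped ENNReal

section DirichletLIntegral

variable {E : Type*} [MeasurableSpace E]

noncomputable def dirichletLIntegral (μ : Measure E) (T : Kernel E E) (f : E → ℝ) : ℝ≥0∞ :=
  ∫⁻ x, ∫⁻ y, ENNReal.ofReal ((f x - f y) ^ 2) ∂(T x) ∂μ

lemma dirichletForm_eq_half_toReal {μ : Measure E} {T : Kernel E E} [IsSFiniteKernel T]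
    {f : E → ℝ} (hf : Measurable f) (hfin : dirichletLIntegral μ T f ≠ ∞) :
    dirichletForm μ T f = 1 / 2 * (dirichletLIntegral μ T f).toReal := by
  have h_inner : Measurable fun x => ∫⁻ y, ENNReal.ofReal ((f x - f y) ^ 2) ∂(T x) :=
    Measurable.lintegral_kernel_prod_right (by fun_prop)
  have h_toReal : ∀ x, ∫ y, (f x - f y) ^ 2 ∂(T x)
      = (∫⁻ y, ENNReal.ofReal ((f x - f y) ^ 2) ∂(T x)).toReal := fun x =>
    integral_eq_lintegral_of_nonneg_ae (.of_forall fun _ => sq_nonneg _) (by fun_prop)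
  rw [dirichletForm, dirichletLIntegral, funext h_toReal,
    integral_toReal h_inner.aemeasurable (ae_lt_top h_inner hfin)]

lemma ofReal_sub_sq_le (a b : ℝ) :
    ENNReal.ofReal ((a - b) ^ 2) ≤ 2 * ENNReal.ofReal (a ^ 2) + 2 * ENNReal.ofReal (b ^ 2) := by
  rw [← ENNReal.ofReal_ofNat 2, ← ENNReal.ofReal_mul zero_le_two, ← ENNReal.ofReal_mul zero_le_two,
    ← ENNReal.ofReal_add (by positivity) (by positivity)]
  exact ENNReal.ofReal_le_ofReal (by nlinarith [sq_nonneg (a + b)])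

lemma dirichletLIntegral_le {μ : Measure E} [SFinite μ] {T : Kernel E E} [IsMarkovKernel T]
    (hT : T ∘ₘ μ = μ) {f : E → ℝ} (hf : Measurable f) :
    dirichletLIntegral μ T f ≤ 4 * ∫⁻ x, ENNReal.ofReal (f x ^ 2) ∂μ := by
  set g : E → ℝ≥0∞ := fun x => ENNReal.ofReal (f x ^ 2)
  have hg : Measurable g := by fun_prop
  calc dirichletLIntegral μ T f ≤ ∫⁻ x, ∫⁻ y, (2 * g x + 2 * g y) ∂(T x) ∂μ :=
        lintegral_mono fun x => lintegral_mono fun y => ofReal_sub_sq_le _ _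
    _ = ∫⁻ p, (2 * g p.1 + 2 * g p.2) ∂(μ ⊗ₘ T) := (Measure.lintegral_compProd (f := fun p => 2 * g p.1 + 2 * g p.2)
          (by fun_prop)).symm
    _ = 2 * ∫⁻ x, g x ∂(μ ⊗ₘ T).fst + 2 * ∫⁻ y, g y ∂(μ ⊗ₘ T).snd := by
        rw [lintegral_add_left (by fun_prop), lintegral_const_mul _ (by fun_prop),
          lintegral_const_mul _ (by fun_prop), Measure.fst, Measure.snd,
          lintegral_map hg measurable_fst, lintegral_map hg measurable_snd]
    _ = 4 * ∫⁻ x, g x ∂μ := by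
        rw [Measure.fst_compProd, Measure.snd_compProd, hT]
        ring

lemma dirichletLIntegral_lt_top {μ : Measure E} [SFinite μ] {T : Kernel E E} [IsMarkovKernel T]
    (hT : T ∘ₘ μ = μ) {f : E → ℝ} (hf : Measurable f) (hf2 : MemLp f 2 μ) :
    dirichletLIntegral μ T f < ∞ :=
  (dirichletLIntegral_le hT hf).trans_lt
    (ENNReal.mul_lt_top (by norm_num) hf2.integrable_sq.lintegral_lt_top)

end DirichletLIntegral

section Adjoint

variable {E F : Type*} [MeasurableSpace E] [MeasurableSpace F]
  {μ : Measure E} {ν : Measure F} {P : Kernel F E} {Q : Kernel E F}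

lemma compProd_eq_map_swap_of_forall_prod [IsFiniteMeasure μ] [IsFiniteKernel Q]
    (h : ∀ A B, MeasurableSet A → MeasurableSet B → (μ ⊗ₘ Q) (A ×ˢ B) = (ν ⊗ₘ P) (B ×ˢ A)) :
    μ ⊗ₘ Q = (ν ⊗ₘ P).map Prod.swap :=
  Measure.ext_prod fun hA hB => by
    rw [Measure.map_apply measurable_swap (hA.prod hB), Set.preimage_swap_prod]
    exact h _ _ hA hB

lemma comp_eq_of_compProd_eq_map_swap [SFinite μ] [SFinite ν] [IsSFiniteKernel Q]
    [IsMarkovKernel P] (hswap : μ ⊗ₘ Q = (ν ⊗ₘ P).map Prod.swap) : Q ∘ₘ μ = ν := by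
  rw [← Measure.snd_compProd, hswap, Measure.snd_map_swap, Measure.fst_compProd]

lemma lintegral_comp_eq_of_compProd_eq_map_swap [SFinite μ] [SFinite ν] [IsSFiniteKernel P]
    [IsSFiniteKernel Q] (hswap : μ ⊗ₘ Q = (ν ⊗ₘ P).map Prod.swap) {D : E → E → ℝ≥0∞}
    (hD : Measurable (Function.uncurry D)) :
    ∫⁻ x, ∫⁻ w, D x w ∂((P ∘ₖ Q) x) ∂μ = ∫⁻ y, ∫⁻ x, ∫⁻ z, D x z ∂(P y) ∂(P y) ∂ν := by
  set G : E × F → ℝ≥0∞ := fun p => ∫⁻ z, D p.1 z ∂(P p.2)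
  have hG : Measurable G := by
    simpa using Measurable.lintegral_kernel_prod_right (κ := Kernel.prodMkLeft E P)
      (f := fun p z => D p.1 z) (by fun_prop)
  calc ∫⁻ x, ∫⁻ w, D x w ∂((P ∘ₖ Q) x) ∂μ = ∫⁻ x, ∫⁻ y, G (x, y) ∂(Q x) ∂μ := by
        refine lintegral_congr fun x => Kernel.lintegral_comp _ _ _ ?_
        exact hD.comp measurable_prodMk_left
    _ = ∫⁻ p, G p ∂(μ ⊗ₘ Q) := (Measure.lintegral_compProd hG).symm
    _ = ∫⁻ q, G q.swap ∂(ν ⊗ₘ P) := by rw [hswap, lintegral_map hG measurable_swap]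
    _ = ∫⁻ y, ∫⁻ x, ∫⁻ z, D x z ∂(P y) ∂(P y) ∂ν :=
        Measure.lintegral_compProd (hG.comp measurable_swap)

end Adjoint

section Holding

variable {E : Type*} [MeasurableSpace E] [MeasurableSingletonClass E] {μ : Measure E} [SFinite μ]
  {P Q : Kernel E E} [IsSFiniteKernel P] [IsSFiniteKernel Q]

lemma two_mul_measure_singleton_mul_lintegral_le (ν : Measure E)
    {D : E → E → ℝ≥0∞} (hD_symm : ∀ x z, D x z = D z x) (hD_diag : ∀ x, D x x = 0) (y : E) :
    2 * ν {y} * ∫⁻ z, D y z ∂ν ≤ ∫⁻ x, ∫⁻ z, D x z ∂ν ∂ν := by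
  set c := ν {y}
  have h_on : (∫⁻ z, D y z ∂ν) * c = ∫⁻ x in {y}, ∫⁻ z, D x z ∂ν ∂ν :=
    (lintegral_singleton (fun x => ∫⁻ z, D x z ∂ν) y).symm
  have h_off : c * ∫⁻ z, D y z ∂ν ≤ ∫⁻ x in {y}ᶜ, ∫⁻ z, D x z ∂ν ∂ν := by
    have h_compl : ∫⁻ x in {y}ᶜ, D x y ∂ν = ∫⁻ z, D y z ∂ν := by
      calc ∫⁻ x in {y}ᶜ, D x y ∂ν = ∫⁻ x in {y}, D x y ∂ν + ∫⁻ x in {y}ᶜ, D x y ∂ν := by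
            rw [lintegral_singleton, hD_diag, zero_mul, zero_add]
        _ = ∫⁻ x, D x y ∂ν := lintegral_add_compl _ (measurableSet_singleton y)
        _ = ∫⁻ z, D y z ∂ν := by simp_rw [hD_symm _ y]
    calc c * ∫⁻ z, D y z ∂ν = c * ∫⁻ x in {y}ᶜ, D x y ∂ν := by rw [h_compl]
      _ ≤ ∫⁻ x in {y}ᶜ, c * D x y ∂ν := lintegral_const_mul_le _ _
      _ ≤ ∫⁻ x in {y}ᶜ, ∫⁻ z, D x z ∂ν ∂ν := lintegral_mono fun x => by
          rw [mul_comm, ← lintegral_singleton (D x) y]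
          exact setLIntegral_le_lintegral _ _
  calc 2 * c * ∫⁻ z, D y z ∂ν = (∫⁻ z, D y z ∂ν) * c + c * ∫⁻ z, D y z ∂ν := by ring
    _ ≤ ∫⁻ x in {y}, ∫⁻ z, D x z ∂ν ∂ν + ∫⁻ x in {y}ᶜ, ∫⁻ z, D x z ∂ν ∂ν :=
        add_le_add h_on.le h_off
    _ = ∫⁻ x, ∫⁻ z, D x z ∂ν ∂ν := lintegral_add_compl _ (measurableSet_singleton y)

lemma two_mul_dirichletLIntegral_le_comp (hswap : μ ⊗ₘ Q = (μ ⊗ₘ P).map Prod.swap)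
    {f : E → ℝ} (hf : Measurable f) {c : ℝ≥0∞} (hc : ∀ᵐ x ∂μ, c ≤ P x {x}) :
    2 * c * dirichletLIntegral μ P f ≤ dirichletLIntegral μ (P ∘ₖ Q) f := by
  set D : E → E → ℝ≥0∞ := fun x z => ENNReal.ofReal ((f x - f z) ^ 2)
  have hD_symm : ∀ x z, D x z = D z x := fun x z => by simp only [D]; ring_nf
  have hD_diag : ∀ x, D x x = 0 := by simp [D]
  calc 2 * c * dirichletLIntegral μ P f ≤ ∫⁻ y, 2 * c * ∫⁻ z, D y z ∂(P y) ∂μ :=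
        lintegral_const_mul_le _ _
    _ ≤ ∫⁻ y, 2 * P y {y} * ∫⁻ z, D y z ∂(P y) ∂μ :=
        lintegral_mono_ae (hc.mono fun y hy => by gcongr)
    _ ≤ ∫⁻ y, ∫⁻ x, ∫⁻ z, D x z ∂(P y) ∂(P y) ∂μ :=
        lintegral_mono fun y => two_mul_measure_singleton_mul_lintegral_le _ hD_symm hD_diag y
    _ = dirichletLIntegral μ (P ∘ₖ Q) f :=
        (lintegral_comp_eq_of_compProd_eq_map_swap hswap (by fun_prop)).symm

end Holding

theorem dirichlet_comp_ge_of_holding_general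
    {E : Type*} [MeasurableSpace E] [MeasurableSingletonClass E]
    (μ : Measure E) [IsProbabilityMeasure μ]
    (P Pstar : Kernel E E) [IsMarkovKernel P] [IsMarkovKernel Pstar]
    (hinv : μ.bind P = μ)
    (hadj : ∀ A B : Set E, MeasurableSet A → MeasurableSet B →
      (μ ⊗ₘ Pstar) (A ×ˢ B) = (μ ⊗ₘ P) (B ×ˢ A))
    (ε : ℝ)
    (hhold : ∀ᵐ x ∂μ, ENNReal.ofReal ε ≤ P x {x})
    (f : E → ℝ) (hf : Measurable f) (hf2 : MemLp f 2 μ) :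
    2 * ε * dirichletForm μ P f ≤ dirichletForm μ (P ∘ₖ Pstar) f := by
  have hswap : μ ⊗ₘ Pstar = (μ ⊗ₘ P).map Prod.swap := compProd_eq_map_swap_of_forall_prod hadj
  have hinv_comp : (P ∘ₖ Pstar) ∘ₘ μ = μ := by
    rw [← Measure.comp_assoc, comp_eq_of_compProd_eq_map_swap hswap, hinv]
  have hP := dirichletLIntegral_lt_top hinv hf hf2
  have hPP := dirichletLIntegral_lt_top hinv_comp hf hf2
  have key := ENNReal.toReal_mono hPP.ne (two_mul_dirichletLIntegral_le_comp hswap hf hhold)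
  rw [ENNReal.toReal_mul, ENNReal.toReal_mul, ENNReal.toReal_ofReal',
    ENNReal.toReal_ofNat] at key
  rw [dirichletForm_eq_half_toReal hf hP.ne, dirichletForm_eq_half_toReal hf hPP.ne]
  nlinarith [le_max_left ε 0, (dirichletLIntegral μ P f).toReal_nonneg]

/-- Suppose the `μ`-invariant Markov kernel `P` (with `μ`-adjoint kernel `P*`)
satisfies `P(x,{x}) ≥ ε` for `μ`-almost all `x`. Then `𝓔(P*P, f) ≥ 2ε·𝓔(P, f)`
for all `f ∈ L²(μ)`; here the kernel of the operator `P*P` is `P ∘ₖ P*`. -/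
theorem dirichlet_comp_ge_of_holding
    {E : Type*} [MeasurableSpace E] [MeasurableSingletonClass E]
    (μ : Measure E) [IsProbabilityMeasure μ]
    (P Pstar : Kernel E E) [IsMarkovKernel P] [IsMarkovKernel Pstar]
    (hinv : μ.bind P = μ)
    (hadj : ∀ A B : Set E, MeasurableSet A → MeasurableSet B →
      (μ ⊗ₘ Pstar) (A ×ˢ B) = (μ ⊗ₘ P) (B ×ˢ A))
    (ε : ℝ) (hε : 0 ≤ ε)
    (hhold : ∀ᵐ x ∂μ, ENNReal.ofReal ε ≤ P x {x})
    (f : E → ℝ) (hf : Measurable f) (hf2 : MemLp f 2 μ) :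
    2 * ε * dirichletForm μ P f ≤ dirichletForm μ (P ∘ₖ Pstar) f :=
  dirichlet_comp_ge_of_holding_general μ P Pstar hinv hadj ε hhold f hf hf2
end

section
/- Suppose X is a Markov chain with kernel P having a unique invariant probability measure μ, and V, f, 𝔰 are nonnegative finite measurable functions with PV ≤ V − f + 𝔰 pointwise. Then μ(f) ≤ μ(𝔰) (whether or not μ(f) = ∞). -/
/-!
Integrating the drift inequality against the invariant measure `μ` turns `∫ PV dμ` into `∫ V dμ`,
which cancels provided `∫ V dμ < ∞`. To guarantee this, replace `V` by `min V n`: since `P` is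
Markov, the drift inequality survives the truncation with `f` replaced by `f` restricted to
`{V ≤ n}`. Hence `∫_{V ≤ n} f dμ ≤ ∫ s dμ` for every `n`, and `V < ∞` lets `n → ∞`.
-/

open MeasureTheory ProbabilityTheory ENNReal

section Drift

variable {E : Type*} [MeasurableSpace E]

theorem lintegral_le_of_drift {P : Kernel E E} {μ : Measure E} (hinv : μ.bind P = μ)
    {W g s : E → ℝ≥0∞} (hW : Measurable W) (hWμ : ∫⁻ x, W x ∂μ ≠ ∞)
    (hdrift : ∀ᵐ x ∂μ, (∫⁻ y, W y ∂(P x)) + g x ≤ W x + s x) :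
    ∫⁻ x, g x ∂μ ≤ ∫⁻ x, s x ∂μ := by
  have hPW : ∫⁻ x, ∫⁻ y, W y ∂(P x) ∂μ = ∫⁻ x, W x ∂μ := by
    rw [← Measure.lintegral_bind P.aemeasurable hW.aemeasurable, hinv]
  refine (ENNReal.add_le_add_iff_left hWμ).mp ?_
  calc (∫⁻ x, W x ∂μ) + ∫⁻ x, g x ∂μ = ∫⁻ x, (∫⁻ y, W y ∂(P x)) + g x ∂μ := by
        rw [lintegral_add_left hW.lintegral_kernel, hPW]
    _ ≤ ∫⁻ x, W x + s x ∂μ := lintegral_mono_ae hdrift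
    _ = (∫⁻ x, W x ∂μ) + ∫⁻ x, s x ∂μ := lintegral_add_left hW _

theorem drift_min_indicator {P : Kernel E E} [IsMarkovKernel P] {V f s : E → ℝ≥0∞} {x : E}
    (hdrift : (∫⁻ y, V y ∂(P x)) + f x ≤ V x + s x) (c : ℝ≥0∞) :
    (∫⁻ y, min (V y) c ∂(P x)) + {y | V y ≤ c}.indicator f x ≤ min (V x) c + s x := by
  by_cases hx : V x ≤ c
  · rw [Set.indicator_of_mem (s := {y | V y ≤ c}) hx, min_eq_left hx]
    calc (∫⁻ y, min (V y) c ∂(P x)) + f x ≤ (∫⁻ y, V y ∂(P x)) + f x := by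
          gcongr with y
          exact min_le_left _ _
      _ ≤ V x + s x := hdrift
  · rw [Set.indicator_of_notMem (s := {y | V y ≤ c}) hx, add_zero, min_eq_right (le_of_not_ge hx)]
    calc (∫⁻ y, min (V y) c ∂(P x)) ≤ ∫⁻ _, c ∂(P x) := lintegral_mono fun y => min_le_right _ _
      _ = c := by simp
      _ ≤ c + s x := le_self_add

theorem lintegral_eq_iSup_setLIntegral_le_nat {V : E → ℝ≥0∞} (hV : ∀ x, V x ≠ ∞)
    (f : E → ℝ≥0∞) (μ : Measure E) :
    ∫⁻ x, f x ∂μ = ⨆ n : ℕ, ∫⁻ x in {x | V x ≤ n}, f x ∂μ := by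
  have hunion : ⋃ n : ℕ, {x | V x ≤ n} = Set.univ :=
    Set.eq_univ_of_forall fun x => Set.mem_iUnion.mpr
      (let ⟨n, hn⟩ := ENNReal.exists_nat_gt (hV x); ⟨n, hn.le⟩)
  have hmono : Monotone fun n : ℕ => {x | V x ≤ n} := fun _ _ hmn =>
    Set.ofPred_subset_ofPred.mpr fun _ hx => hx.trans (Nat.cast_le.mpr hmn)
  rw [← setLIntegral_iUnion_of_directed f hmono.directed_le, hunion, Measure.restrict_univ]

end Drift

theorem integral_drift_bound_general
    {E : Type*} [MeasurableSpace E]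
    (P : Kernel E E) [IsMarkovKernel P]
    (μ : Measure E) [IsProbabilityMeasure μ]
    (hinv : μ.bind P = μ)
    (V f s : E → ℝ≥0∞)
    (hV : Measurable V)
    (hVfin : ∀ x, V x ≠ ∞)
    (hdrift : ∀ x, (∫⁻ y, V y ∂(P x)) + f x ≤ V x + s x) :
    ∫⁻ x, f x ∂μ ≤ ∫⁻ x, s x ∂μ := by
  rw [lintegral_eq_iSup_setLIntegral_le_nat hVfin]
  refine iSup_le fun n => ?_
  have hVn : Measurable fun x => min (V x) (n : ℝ≥0∞) := hV.min measurable_const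
  have hVnμ : ∫⁻ x, min (V x) (n : ℝ≥0∞) ∂μ ≠ ∞ :=
    ne_top_of_le_ne_top (by simp) (lintegral_mono fun x => min_le_right (V x) (n : ℝ≥0∞))
  rw [← lintegral_indicator (measurableSet_le hV measurable_const)]
  exact lintegral_le_of_drift hinv hVn hVnμ
    (.of_forall fun x => drift_min_indicator (hdrift x) n)

/-- Let `P` be a Markov kernel with unique invariant probability measure `μ`, and
`V, f, 𝔰` nonnegative finite measurable functions with `PV ≤ V − f + 𝔰` pointwise
(equivalently `PV + f ≤ V + 𝔰` since all quantities are finite and nonnegative).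
Then `μ(f) ≤ μ(𝔰)`, whether or not `μ(f) = ∞`. -/
theorem integral_drift_bound
    {E : Type*} [MeasurableSpace E]
    (P : Kernel E E) [IsMarkovKernel P]
    (μ : Measure E) [IsProbabilityMeasure μ]
    (hinv : μ.bind P = μ)
    (huniq : ∀ ν : Measure E, IsProbabilityMeasure ν → ν.bind P = ν → ν = μ)
    (V f s : E → ℝ≥0∞)
    (hV : Measurable V) (hf : Measurable f) (hs : Measurable s)
    (hVfin : ∀ x, V x ≠ ∞) (hffin : ∀ x, f x ≠ ∞) (hsfin : ∀ x, s x ≠ ∞)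
    (hdrift : ∀ x, (∫⁻ y, V y ∂(P x)) + f x ≤ V x + s x) :
    ∫⁻ x, f x ∂μ ≤ ∫⁻ x, s x ∂μ :=
  integral_drift_bound_general P μ hinv V f s hV hVfin hdrift
end

section
/- Let P satisfy P(x,A) ≥ ε ν(A) 1_C(x) for a probability measure ν, ε > 0, and be μ-invariant. Then with m = μ(f·1_C)/μ(C), we have ‖(f−m)1_C‖²_{L²(μ)} ≤ (2/ε) 𝓔(P,f) for all f ∈ L²(μ). -/
/-!
For `x ∈ C` the minorization gives `P(x, ·) ≥ ε ν`, so with `c = ν(f)` Jensen's inequality yields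
`(f x - c)² ≤ ∫ (f x - f y)² ν(dy) ≤ ε⁻¹ ∫ (f x - f y)² P(x, dy)`. Integrating over `C` and using
that the `μ`-average `m` of `f` on `C` minimizes `c ↦ ∫_C (f - c)² dμ` gives the bound. The
pointwise estimates are taken in `ℝ≥0∞`, where no integrability with respect to `ν` is needed;
invariance makes both marginals of `μ ⊗ₘ P` equal to `μ`, so `(f x - f y)²` is integrable
against it and the Dirichlet form is an honest integral.
-/

open MeasureTheory ProbabilityTheory

open scoped ENNReal

section Variance

variable {Ω : Type*} [MeasurableSpace Ω] {μ : Measure Ω} {f : Ω → ℝ}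

theorem integral_sq_sub_average_le [IsFiniteMeasure μ] (hf : MemLp f 2 μ) (c : ℝ) :
    ∫ x, (f x - ⨍ y, f y ∂μ) ^ 2 ∂μ ≤ ∫ x, (f x - c) ^ 2 ∂μ := by
  set m := ⨍ y, f y ∂μ
  have hsqInt : Integrable (fun x => (f x - m) ^ 2) μ := (hf.sub (memLp_const m)).integrable_sq
  have hf1 : Integrable f μ := hf.integrable one_le_two
  have hcross : ∫ x, (m - c) * (2 * f x - (m + c)) ∂μ = (m - c) ^ 2 * μ.real Set.univ := by
    rw [integral_const_mul, integral_sub (hf1.const_mul 2) (integrable_const _),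
      integral_const_mul, integral_const, ← measure_smul_average, smul_eq_mul, smul_eq_mul]
    ring
  have hsplit : ∫ x, (f x - c) ^ 2 ∂μ
      = ∫ x, (f x - m) ^ 2 ∂μ + ∫ x, (m - c) * (2 * f x - (m + c)) ∂μ := by
    have hcrossInt : Integrable (fun x => (m - c) * (2 * f x - (m + c))) μ := by fun_prop
    rw [← integral_add hsqInt hcrossInt]
    congr 1 with x
    ring
  rw [hsplit, hcross]
  have : 0 ≤ (m - c) ^ 2 * μ.real Set.univ := by positivity
  linarith

theorem ofReal_sq_sub_integral_le_lintegral [IsProbabilityMeasure μ]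
    (hf : AEStronglyMeasurable f μ) (a : ℝ) :
    ENNReal.ofReal ((a - ∫ y, f y ∂μ) ^ 2) ≤ ∫⁻ y, ENNReal.ofReal ((a - f y) ^ 2) ∂μ := by
  have hg : AEStronglyMeasurable (fun y => a - f y) μ := aestronglyMeasurable_const.sub hf
  by_cases hf2 : MemLp f 2 μ
  · have hg2 : MemLp (fun y => a - f y) 2 μ := (memLp_const a).sub hf2
    have hmean : ∫ y, (a - f y) ∂μ = a - ∫ y, f y ∂μ := by
      rw [integral_sub (integrable_const a) (hf2.integrable one_le_two), integral_const]
      simp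
    have hjensen : (∫ y, (a - f y) ∂μ) ^ 2 ≤ ∫ y, (a - f y) ^ 2 ∂μ := by
      have := variance_nonneg (fun y => a - f y) μ
      rw [variance_eq_sub hg2] at this
      simpa [sub_nonneg] using this
    rw [← ofReal_integral_eq_lintegral_ofReal hg2.integrable_sq
      (ae_of_all _ fun _ => sq_nonneg _), ← hmean]
    exact ENNReal.ofReal_le_ofReal hjensen
  · suffices h : ∫⁻ y, ENNReal.ofReal ((a - f y) ^ 2) ∂μ = ∞ by simp [h]
    by_contra hfin
    have hint : Integrable (fun y => (a - f y) ^ 2) μ :=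
      ⟨hg.pow 2, (hasFiniteIntegral_iff_ofReal (ae_of_all _ fun _ => sq_nonneg _)).2
        (lt_top_iff_ne_top.2 hfin)⟩
    have hg2 : MemLp (fun y => a - f y) 2 μ := (memLp_two_iff_integrable_sq hg).2 hint
    refine hf2 ?_
    convert (memLp_const a).sub hg2 using 1
    funext y
    simp

end Variance

section Kernel

variable {E : Type*} [MeasurableSpace E] {μ : Measure E} {P : Kernel E E} {f : E → ℝ}

theorem integrable_sq_sub_compProd [SFinite μ] [IsMarkovKernel P] (hinv : μ.bind P = μ)
    (hf : MemLp f 2 μ) : Integrable (fun p : E × E => (f p.1 - f p.2) ^ 2) (μ ⊗ₘ P) := by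
  have hfst : MemLp (fun p : E × E => f p.1) 2 (μ ⊗ₘ P) :=
    MemLp.comp_of_map (by rwa [← Measure.fst, Measure.fst_compProd]) measurable_fst.aemeasurable
  have hsnd : MemLp (fun p : E × E => f p.2) 2 (μ ⊗ₘ P) :=
    MemLp.comp_of_map (by rwa [← Measure.snd, Measure.snd_compProd, hinv])
      measurable_snd.aemeasurable
  exact (hfst.sub hsnd).integrable_sq

theorem dirichletForm_nonneg (μ : Measure E) (P : Kernel E E) (f : E → ℝ) :
    0 ≤ dirichletForm μ P f := by
  unfold dirichletForm
  positivity

theorem ofReal_two_mul_dirichletForm [SFinite μ] [IsMarkovKernel P] (hinv : μ.bind P = μ)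
    (hf : Measurable f) (hf2 : MemLp f 2 μ) :
    ENNReal.ofReal (2 * dirichletForm μ P f)
      = ∫⁻ x, ∫⁻ y, ENNReal.ofReal ((f x - f y) ^ 2) ∂P x ∂μ := by
  have hint := integrable_sq_sub_compProd hinv hf2
  rw [dirichletForm, ← mul_assoc, mul_one_div_cancel two_ne_zero, one_mul,
    ← Measure.integral_compProd hint,
    ofReal_integral_eq_lintegral_ofReal hint (ae_of_all _ fun _ => sq_nonneg _),
    Measure.lintegral_compProd (by fun_prop)]

theorem setLIntegral_lintegral_le_of_minorization [IsSFiniteKernel P] {C : Set E}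
    {ν : Measure E} {ε : ℝ} (hε : 0 < ε)
    (hminor : ∀ x ∈ C, ∀ A : Set E, MeasurableSet A → ENNReal.ofReal ε * ν A ≤ P x A)
    {g : E → E → ℝ≥0∞} (hg : Measurable (Function.uncurry g)) :
    ∫⁻ x in C, ∫⁻ y, g x y ∂ν ∂μ ≤ (ENNReal.ofReal ε)⁻¹ * ∫⁻ x, ∫⁻ y, g x y ∂P x ∂μ := by
  have hpoint : ∀ x ∈ C, ∫⁻ y, g x y ∂ν ≤ (ENNReal.ofReal ε)⁻¹ * ∫⁻ y, g x y ∂P x := by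
    intro x hx
    have hle : ENNReal.ofReal ε • ν ≤ P x := Measure.le_iff.2 fun A hA => hminor x hx A hA
    rw [← ENNReal.mul_le_iff_le_inv (ENNReal.ofReal_pos.2 hε).ne' ENNReal.ofReal_ne_top,
      ← smul_eq_mul, ← lintegral_smul_measure]
    exact lintegral_mono' hle le_rfl
  calc ∫⁻ x in C, ∫⁻ y, g x y ∂ν ∂μ
      ≤ ∫⁻ x in C, (ENNReal.ofReal ε)⁻¹ * ∫⁻ y, g x y ∂P x ∂μ :=
        setLIntegral_mono (hg.lintegral_kernel_prod_right.const_mul _) hpoint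
    _ ≤ ∫⁻ x, (ENNReal.ofReal ε)⁻¹ * ∫⁻ y, g x y ∂P x ∂μ := setLIntegral_le_lintegral _ _
    _ = (ENNReal.ofReal ε)⁻¹ * ∫⁻ x, ∫⁻ y, g x y ∂P x ∂μ :=
        lintegral_const_mul _ hg.lintegral_kernel_prod_right

end Kernel

theorem local_poincare_from_minorization_general
    {E : Type*} [MeasurableSpace E] (μ : Measure E) [IsProbabilityMeasure μ]
    (P : Kernel E E) [IsMarkovKernel P] (hinv : μ.bind P = μ)
    (C : Set E)
    (ν : Measure E) [IsProbabilityMeasure ν] (ε : ℝ) (hε : 0 < ε)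
    (hminor : ∀ x ∈ C, ∀ A : Set E, MeasurableSet A → ENNReal.ofReal ε * ν A ≤ P x A)
    (f : E → ℝ) (hf : Measurable f) (hf2 : MemLp f 2 μ) :
    ∫ x in C, (f x - (∫ y in C, f y ∂μ) / (μ C).toReal) ^ 2 ∂μ ≤
      (2 / ε) * dirichletForm μ P f := by
  have hm : (∫ y in C, f y ∂μ) / (μ C).toReal = ⨍ y in C, f y ∂μ := by
    rw [setAverage_eq, smul_eq_mul, measureReal_def, div_eq_inv_mul]
  set c := ∫ y, f y ∂ν
  have hcInt : Integrable (fun x => (f x - c) ^ 2) (μ.restrict C) :=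
    ((hf2.sub (memLp_const c)).restrict C).integrable_sq
  rw [hm, ← ENNReal.ofReal_le_ofReal_iff (by have := dirichletForm_nonneg μ P f; positivity)]
  calc ENNReal.ofReal (∫ x in C, (f x - ⨍ y in C, f y ∂μ) ^ 2 ∂μ)
      ≤ ENNReal.ofReal (∫ x in C, (f x - c) ^ 2 ∂μ) :=
        ENNReal.ofReal_le_ofReal (integral_sq_sub_average_le (hf2.restrict C) c)
    _ = ∫⁻ x in C, ENNReal.ofReal ((f x - c) ^ 2) ∂μ :=
        ofReal_integral_eq_lintegral_ofReal hcInt (ae_of_all _ fun _ => sq_nonneg _)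
    _ ≤ ∫⁻ x in C, ∫⁻ y, ENNReal.ofReal ((f x - f y) ^ 2) ∂ν ∂μ :=
        lintegral_mono fun x => ofReal_sq_sub_integral_le_lintegral hf.aestronglyMeasurable (f x)
    _ ≤ (ENNReal.ofReal ε)⁻¹ * ∫⁻ x, ∫⁻ y, ENNReal.ofReal ((f x - f y) ^ 2) ∂P x ∂μ :=
        setLIntegral_lintegral_le_of_minorization hε hminor (by fun_prop)
    _ = ENNReal.ofReal (2 / ε * dirichletForm μ P f) := by
        rw [← ofReal_two_mul_dirichletForm hinv hf hf2, ← ENNReal.ofReal_inv_of_pos hε,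
          ← ENNReal.ofReal_mul (inv_nonneg.2 hε.le), ← mul_assoc, div_eq_inv_mul]

/-- Minorization `P(x,A) ≥ ε ν(A) 1_C(x)` for a `μ`-invariant Markov kernel `P`
implies a local Poincaré inequality: with `m = μ(f·1_C)/μ(C)`,
`‖(f−m)·1_C‖²_{L²(μ)} ≤ (2/ε)·𝓔(P,f)` for all `f ∈ L²(μ)`. -/
theorem local_poincare_from_minorization
    {E : Type*} [MeasurableSpace E] (μ : Measure E) [IsProbabilityMeasure μ]
    (P : Kernel E E) [IsMarkovKernel P] (hinv : μ.bind P = μ)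
    (C : Set E) (hC : MeasurableSet C) (hCpos : 0 < μ C)
    (ν : Measure E) [IsProbabilityMeasure ν] (ε : ℝ) (hε : 0 < ε)
    (hminor : ∀ x ∈ C, ∀ A : Set E, MeasurableSet A → ENNReal.ofReal ε * ν A ≤ P x A)
    (f : E → ℝ) (hf : Measurable f) (hf2 : MemLp f 2 μ) :
    ∫ x in C, (f x - (∫ y in C, f y ∂μ) / (μ C).toReal) ^ 2 ∂μ ≤
      (2 / ε) * dirichletForm μ P f :=
  local_poincare_from_minorization_general μ P hinv C ν ε hε hminor f hf hf2
end

section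
/- Let ν be a symmetric probability measure on E×E and h : E → [0,∞) with h ∈ L¹ of the first marginal of ν. With A_t := {x : h(x) ≤ t}, we have E_ν[|h(X)−h(Y)|] = 2∫₀^∞ ν(A_t × A_tᶜ) dt. -/
open MeasureTheory Set ENNReal

/-!
Write `|h x - h y| = (h x - h y)⁺ + (h y - h x)⁺`; by the symmetry of `ν` both parts have the
same integral. Since `h ≥ 0`, `(h y - h x)⁺` is the Lebesgue measure of the set of `t > 0` with
`h x ≤ t < h y`, and Tonelli turns the integral of that length into `∫ ν {h X ≤ t < h Y} dt`.
-/

theorem ENNReal.ofReal_abs (x : ℝ) :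
    ENNReal.ofReal |x| = ENNReal.ofReal x + ENNReal.ofReal (-x) := by
  rcases le_total 0 x with hx | hx
  · simp [abs_of_nonneg hx, ofReal_of_nonpos (neg_nonpos.2 hx)]
  · simp [abs_of_nonpos hx, ofReal_of_nonpos hx]

theorem lintegral_Ioi_zero_indicator_Ico {a : ℝ} (ha : 0 ≤ a) (b : ℝ) :
    ∫⁻ t in Ioi 0, (Ico a b).indicator 1 t = ENNReal.ofReal (b - a) := by
  rw [Measure.restrict_congr_set Ioi_ae_eq_Ici, lintegral_indicator_one measurableSet_Ico,
    Measure.restrict_apply measurableSet_Ico,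
    inter_eq_left.2 (Ico_subset_Ici_self.trans (Ici_subset_Ici.2 ha)), Real.volume_Ico]

section LayerCake

variable {α : Type*} [MeasurableSpace α] {μ : Measure α} {f g : α → ℝ}

theorem measurable_measure_setOf_le_and_lt [SFinite μ] (hf : Measurable f) (hg : Measurable g) :
    Measurable fun t => μ {x | f x ≤ t ∧ t < g x} :=
  measurable_measure_prodMk_left (s := {q : ℝ × α | f q.2 ≤ q.1 ∧ q.1 < g q.2})
    ((measurableSet_le (hf.comp measurable_snd) measurable_fst).inter
      (measurableSet_lt measurable_fst (hg.comp measurable_snd)))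

theorem lintegral_ofReal_sub_eq_lintegral_measure [SFinite μ] (hf : Measurable f)
    (hg : Measurable g) (hf₀ : ∀ x, 0 ≤ f x) :
    ∫⁻ x, ENNReal.ofReal (g x - f x) ∂μ = ∫⁻ t in Ioi 0, μ {x | f x ≤ t ∧ t < g x} := by
  have hmeas : Measurable fun q : α × ℝ => (Ico (f q.1) (g q.1)).indicator 1 q.2 :=
    (measurable_one (α := ℝ≥0∞)).indicator (s := {q : α × ℝ | f q.1 ≤ q.2 ∧ q.2 < g q.1})
      ((measurableSet_le (hf.comp measurable_fst) measurable_snd).inter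
        (measurableSet_lt measurable_snd (hg.comp measurable_fst)))
  calc ∫⁻ x, ENNReal.ofReal (g x - f x) ∂μ
      = ∫⁻ x, (∫⁻ t in Ioi 0, (Ico (f x) (g x)).indicator 1 t) ∂μ := by
        simp_rw [lintegral_Ioi_zero_indicator_Ico (hf₀ _)]
    _ = ∫⁻ t in Ioi (0 : ℝ), ∫⁻ x, (Ico (f x) (g x)).indicator 1 t ∂μ :=
        lintegral_lintegral_swap hmeas.aemeasurable
    _ = ∫⁻ t in Ioi 0, μ {x | f x ≤ t ∧ t < g x} :=
        lintegral_congr fun _ => lintegral_indicator_one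
          ((measurableSet_le hf measurable_const).inter (measurableSet_lt measurable_const hg))

end LayerCake

theorem lintegral_comp_swap_of_map_swap_eq {α : Type*} [MeasurableSpace α] {μ : Measure (α × α)}
    (hsym : μ.map Prod.swap = μ) (F : α × α → ℝ≥0∞) :
    ∫⁻ p, F p.swap ∂μ = ∫⁻ p, F p ∂μ :=
  (MeasurePreserving.mk measurable_swap hsym).lintegral_comp_emb
    MeasurableEquiv.prodComm.measurableEmbedding F

theorem lintegral_ofReal_abs_sub_of_map_swap_eq {α : Type*} [MeasurableSpace α]
    {μ : Measure (α × α)} (hsym : μ.map Prod.swap = μ) {f : α → ℝ} (hf : Measurable f) :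
    ∫⁻ p, ENNReal.ofReal |f p.1 - f p.2| ∂μ = 2 * ∫⁻ p, ENNReal.ofReal (f p.2 - f p.1) ∂μ := by
  have hswap := lintegral_comp_swap_of_map_swap_eq hsym fun p => ENNReal.ofReal (f p.2 - f p.1)
  simp only [Prod.fst_swap, Prod.snd_swap] at hswap
  simp_rw [ENNReal.ofReal_abs, neg_sub]
  rw [lintegral_add_left (by fun_prop), hswap, two_mul]

theorem lawler_sokal_layer_cake_general
    {E : Type*} [MeasurableSpace E] (ν : Measure (E × E)) [IsProbabilityMeasure ν]
    (hsym : ν.map Prod.swap = ν)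
    (h : E → ℝ) (hmeas : Measurable h) (hpos : ∀ x, 0 ≤ h x) :
    ∫ p : E × E, |h p.1 - h p.2| ∂ν =
      2 * ∫ t in Set.Ioi (0 : ℝ), (ν ({x | h x ≤ t} ×ˢ {x | h x ≤ t}ᶜ)).toReal := by
  have hm₁ : Measurable fun p : E × E => h p.1 := hmeas.comp measurable_fst
  have hm₂ : Measurable fun p : E × E => h p.2 := hmeas.comp measurable_snd
  have hprod : ∀ t, {x | h x ≤ t} ×ˢ {x | h x ≤ t}ᶜ = {p : E × E | h p.1 ≤ t ∧ t < h p.2} := by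
    intro t; ext p; simp [not_le]
  simp_rw [hprod]
  rw [integral_eq_lintegral_of_nonneg_ae (.of_forall fun p => abs_nonneg _)
      (by fun_prop : Measurable fun p : E × E => |h p.1 - h p.2|).aestronglyMeasurable,
    integral_toReal (measurable_measure_setOf_le_and_lt hm₁ hm₂).aemeasurable
      (.of_forall fun t => measure_lt_top _ _),
    lintegral_ofReal_abs_sub_of_map_swap_eq hsym hmeas,
    lintegral_ofReal_sub_eq_lintegral_measure hm₁ hm₂ fun p => hpos p.1, toReal_mul]
  norm_num

/-- Lawler–Sokal layer-cake identity: let `ν` be a symmetric probability measure on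
`E×E` and `h : E → [0,∞)` with `p ↦ h(p₁)` integrable with respect to `ν`. With
`A_t = {x : h(x) ≤ t}`, we have `E_ν[|h(X)−h(Y)|] = 2∫₀^∞ ν(A_t × A_tᶜ) dt`. -/
theorem lawler_sokal_layer_cake
    {E : Type*} [MeasurableSpace E] (ν : Measure (E × E)) [IsProbabilityMeasure ν]
    (hsym : ν.map Prod.swap = ν)
    (h : E → ℝ) (hmeas : Measurable h) (hpos : ∀ x, 0 ≤ h x)
    (hint : Integrable (fun p : E × E => h p.1) ν) :
    ∫ p : E × E, |h p.1 - h p.2| ∂ν =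
      2 * ∫ t in Set.Ioi (0 : ℝ), (ν ({x | h x ≤ t} ×ˢ {x | h x ≤ t}ᶜ)).toReal :=
  lawler_sokal_layer_cake_general ν hsym h hmeas hpos
end
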